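/- Let n₀, n₁, …, n_N be positive integers, let L_i : ℝ^{n_{i−1}} → ℝ^{n_i} be affine maps for i = 1, …, N, and let r denote the coordinatewise ReLU map r(y)_j = max(y_j, 0). Set F = L_N ∘ r ∘ L_{N−1} ∘ ⋯ ∘ r ∘ L_1 : ℝ^{n₀} → ℝ^{n_N}, and let σ : ℝ^{n_N} → {1, …, n_N} send y to the least index i at which y_i attains max_j y_j (the index-max function with least-index tie-breaking). Then there exist m ∈ ℕ, affine maps l₁, …, l_m : ℝ^{n₀} → ℝ, and a function g : {0,1}^m → {1, …, n_N} such that σ(F(x)) = g(s(x)) for every x ∈ ℝ^{n₀}, where s(x) is the sign pattern of x with respect to l₁, …, l_m. That is, the classification function σ ∘ F computed by the network is a sign-pattern function, i.e. a linear logical function. -/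

import Mathlib

/-- Coordinatewise ReLU: `r(y)_j = max(y_j, 0)`. -/
def relu {d : ℕ} (y : Fin d → ℝ) : Fin d → ℝ := fun j => max (y j) 0

/-- The feed-forward ReLU network `L_{N} ∘ r ∘ L_{N-1} ∘ ⋯ ∘ r ∘ L_0` with layer
widths `n 0, n 1, …` and affine layer maps `L i : ℝ^{n i} → ℝ^{n (i+1)}`:
`net n L 0 = L 0`, and `net n L (N+1) = L (N+1) ∘ relu ∘ net n L N`. -/
def net (n : ℕ → ℕ) (L : ∀ i : ℕ, (Fin (n i) → ℝ) →ᵃ[ℝ] (Fin (n (i + 1)) → ℝ)) :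
    (N : ℕ) → (Fin (n 0) → ℝ) → (Fin (n (N + 1)) → ℝ)
  | 0, x => L 0 x
  | N + 1, x => L (N + 1) (relu (net n L N x))

/-- The sign pattern of `x` with respect to the affine maps `l₁, …, l_m`:
`s(x)_j = 1` (i.e. `true`) iff `l_j(x) ≥ 0`. -/
noncomputable def signPattern {d m : ℕ} (l : Fin m → ((Fin d → ℝ) →ᵃ[ℝ] ℝ)) (x : Fin d → ℝ) :
    Fin m → Bool :=
  fun j => decide (0 ≤ l j x)

/-- `σ : ℝ^d → Fin d` is the index-max function with least-index tie-breaking: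
`σ y` attains the maximum of `y`, and is the least index doing so. -/
def IsIndexMax {d : ℕ} (σ : (Fin d → ℝ) → Fin d) : Prop :=
  ∀ y : Fin d → ℝ, (∀ j, y j ≤ y (σ y)) ∧ ∀ i : Fin d, (∀ j, y j ≤ y i) → σ y ≤ i

lemma net_piecewise_affine (n : ℕ → ℕ)
    (L : ∀ i : ℕ, (Fin (n i) → ℝ) →ᵃ[ℝ] (Fin (n (i + 1)) → ℝ)) (N : ℕ) :
    ∃ (ι : Type) (_ : Fintype ι) (l : ι → ((Fin (n 0) → ℝ) →ᵃ[ℝ] ℝ))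
      (A : (ι → Bool) → ((Fin (n 0) → ℝ) →ᵃ[ℝ] (Fin (n (N + 1)) → ℝ))),
      ∀ x, net n L N x = A (fun i => decide (0 ≤ l i x)) x := by
  induction N with
  | zero =>
    exact ⟨Empty, inferInstance, Empty.elim, fun _ => L 0, fun x => rfl⟩
  | succ N ih =>
    obtain ⟨ι, _, l, A, hA⟩ := ih
    classical
    refine ⟨ι ⊕ ((ι → Bool) × Fin (n (N + 1))), inferInstance,
      Sum.elim l (fun pj => (AffineMap.proj pj.2).comp (A pj.1)),
      fun s => (L (N + 1)).comp
        (AffineMap.pi fun j =>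
          if s (Sum.inr (fun i => s (Sum.inl i), j)) then
            (AffineMap.proj j).comp (A (fun i => s (Sum.inl i)))
          else AffineMap.const ℝ _ 0), ?_⟩
    intro x
    set s : (ι ⊕ ((ι → Bool) × Fin (n (N + 1)))) → Bool :=
      fun i => decide (0 ≤ Sum.elim l (fun pj => (AffineMap.proj pj.2).comp (A pj.1)) i x)
    have hp : (fun i => s (Sum.inl i)) = fun i => decide (0 ≤ l i x) := rfl
    show L (N + 1) (relu (net n L N x)) = _
    simp only [AffineMap.comp_apply, AffineMap.pi_apply]
    congr 1
    funext j
    rw [hA x]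
    simp only [hp]
    by_cases h : 0 ≤ A (fun i => decide (0 ≤ l i x)) x j
    · have hs : s (Sum.inr ((fun i => decide (0 ≤ l i x)), j)) = true := by
        simp [s, h]
      simp [AffineMap.pi_apply, hs, relu, max_eq_left h]
    · have hs : s (Sum.inr ((fun i => decide (0 ≤ l i x)), j)) = false := by
        simp [s, h]
      simp [AffineMap.pi_apply, hs, relu, max_eq_right (le_of_not_ge h)]


lemma sign_pattern_of_piecewise {n0 d : ℕ} (hd : 0 < d) (ι : Type) [Fintype ι]
    (l : ι → ((Fin n0 → ℝ) →ᵃ[ℝ] ℝ))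
    (A : (ι → Bool) → ((Fin n0 → ℝ) →ᵃ[ℝ] (Fin d → ℝ)))
    (F : (Fin n0 → ℝ) → (Fin d → ℝ))
    (hA : ∀ x, F x = A (fun i => decide (0 ≤ l i x)) x)
    (σ : (Fin d → ℝ) → Fin d) (hσ : IsIndexMax σ) :
    ∃ (m : ℕ) (l' : Fin m → ((Fin n0 → ℝ) →ᵃ[ℝ] ℝ)) (g : (Fin m → Bool) → Fin d),
      ∀ x : Fin n0 → ℝ, σ (F x) = g (signPattern l' x) := by
  classical
  set ι' := ι ⊕ ((ι → Bool) × Fin d × Fin d) with hι'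
  set l' : ι' → ((Fin n0 → ℝ) →ᵃ[ℝ] ℝ) :=
    Sum.elim l (fun pij =>
      (AffineMap.proj pij.2.1).comp (A pij.1) - (AffineMap.proj pij.2.2).comp (A pij.1))
    with hl'
  set G : (ι' → Bool) → Fin d := fun s =>
    if h : (Finset.univ.filter
        (fun i : Fin d => ∀ j, s (Sum.inr (fun k => s (Sum.inl k), i, j)) = true)).Nonempty
    then (Finset.univ.filter
        (fun i : Fin d => ∀ j, s (Sum.inr (fun k => s (Sum.inl k), i, j)) = true)).min' h
    else ⟨0, hd⟩ with hG
  have key : ∀ x, σ (F x) = G (fun i => decide (0 ≤ l' i x)) := by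
    intro x
    rw [hA x]
    set p : ι → Bool := fun i => decide (0 ≤ l i x) with hp
    set y : Fin d → ℝ := A p x with hy
    set s : ι' → Bool := fun i => decide (0 ≤ l' i x) with hs
    have hps : (fun k => s (Sum.inl k)) = p := rfl
    have hbit : ∀ i j : Fin d, s (Sum.inr (p, i, j)) = true ↔ y j ≤ y i := by
      intro i j
      simp [hs, hl', hy, sub_nonneg, AffineMap.proj]
      exact Iff.rfl
    have hT : (Finset.univ.filter
        (fun i : Fin d => ∀ j, s (Sum.inr (fun k => s (Sum.inl k), i, j)) = true))
        = Finset.univ.filter (fun i : Fin d => ∀ j, y j ≤ y i) := by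
      apply Finset.filter_congr
      intro i _
      rw [hps]
      exact ⟨fun h j => (hbit i j).mp (h j), fun h j => (hbit i j).mpr (h j)⟩
    have hmem : σ y ∈ Finset.univ.filter (fun i : Fin d => ∀ j, y j ≤ y i) := by
      simp only [Finset.mem_filter, Finset.mem_univ, true_and]
      exact (hσ y).1
    show σ y = if h : (Finset.univ.filter
        (fun i : Fin d => ∀ j, s (Sum.inr (fun k => s (Sum.inl k), i, j)) = true)).Nonempty
      then (Finset.univ.filter
        (fun i : Fin d => ∀ j, s (Sum.inr (fun k => s (Sum.inl k), i, j)) = true)).min' h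
      else ⟨0, hd⟩
    simp only [hT]
    rw [dif_pos ⟨σ y, hmem⟩]
    apply le_antisymm
    · refine (hσ y).2 _ ?_
      have := Finset.min'_mem _ (⟨σ y, hmem⟩ :
        (Finset.univ.filter (fun i : Fin d => ∀ j, y j ≤ y i)).Nonempty)
      simpa using this
    · exact Finset.min'_le _ _ hmem
  haveI : Fintype ι' := by rw [hι']; infer_instance
  obtain ⟨e⟩ : Nonempty (ι' ≃ Fin (Fintype.card ι')) := ⟨Fintype.equivFin ι'⟩
  refine ⟨Fintype.card ι', fun j => l' (e.symm j), fun t => G (fun i => t (e i)), ?_⟩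
  intro x
  rw [key x]
  have hfun : (fun i => signPattern (fun j => l' (e.symm j)) x (e i))
      = fun i => decide (0 ≤ l' i x) := by
    funext i; simp [signPattern]
  show G (fun i => decide (0 ≤ l' i x))
      = G (fun i => signPattern (fun j => l' (e.symm j)) x (e i))
  rw [hfun]


/-- The classification function `σ ∘ F` computed by a feed-forward ReLU network,
where `σ` is the index-max function (with least-index tie-breaking), is a
sign-pattern function, i.e. a linear logical function: there are affine maps
`l₁, …, l_m : ℝ^{n₀} → ℝ` and `g : {0,1}^m → {1,…,n_N}` with
`σ(F(x)) = g(s(x))` for all `x`. -/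
theorem relu_network_classifier_is_sign_pattern_function
    (n : ℕ → ℕ) (hn : ∀ i, 0 < n i)
    (L : ∀ i : ℕ, (Fin (n i) → ℝ) →ᵃ[ℝ] (Fin (n (i + 1)) → ℝ)) (N : ℕ)
    (σ : (Fin (n (N + 1)) → ℝ) → Fin (n (N + 1))) (hσ : IsIndexMax σ) :
    ∃ (m : ℕ) (l : Fin m → ((Fin (n 0) → ℝ) →ᵃ[ℝ] ℝ))
      (g : (Fin m → Bool) → Fin (n (N + 1))),
      ∀ x : Fin (n 0) → ℝ, σ (net n L N x) = g (signPattern l x) := by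
  obtain ⟨ι, _, l, A, hA⟩ := net_piecewise_affine n L N
  exact sign_pattern_of_piecewise (hn (N + 1)) ι l A (net n L N) hA σ hσ
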